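/- arXiv:2008.00056 — 2 statements merged into one kernel-verified Lean document; each statement's English description precedes it below -/
import Mathlib

section
/- Let $m_k, n_k > 0$ satisfy $m_k = n_k(1 - e^{-2\nu\lambda_k^2 t})^{1/2}$ for fixed $t, \nu > 0$, where $\lambda_k \sim c k^{1/d}$ with $c > 0$. Then $\sum_{k=1}^{\infty} \left(\frac{m_k}{n_k} - 1\right)^2 < \infty$. -/
/-!
Writing `E k = exp (-(2 ν λ_k² t))`, the ratio is `m_k / n_k = √(1 - E k)`, and
`(√(1 - x) - 1)² ≤ x` on `[0, 1]`. Since `λ_k ≥ c k^{1/d} / 2` eventually, `E k` is dominated by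
`exp (-a k^{2/d})` with `a > 0`, which decays faster than any power of `k` and is summable.
-/

open Filter Topology Real Asymptotics

lemma sq_sqrt_one_sub_sub_one_le {x : ℝ} (hx₀ : 0 ≤ x) (hx₁ : x ≤ 1) :
    (√(1 - x) - 1) ^ 2 ≤ x := by
  have hsq : √(1 - x) ^ 2 = 1 - x := sq_sqrt (by linarith)
  have hle : √(1 - x) ≤ 1 := sqrt_le_one.mpr (by linarith)
  nlinarith [sqrt_nonneg (1 - x)]

lemma summable_exp_neg_mul_rpow {a p : ℝ} (ha : 0 < a) (hp : 0 < p) :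
    Summable fun k : ℕ => exp (-(a * (k : ℝ) ^ p)) := by
  have hlim : Tendsto (fun k : ℕ => (k : ℝ) ^ p) atTop atTop :=
    (tendsto_rpow_atTop hp).comp tendsto_natCast_atTop_atTop
  have ho := (isLittleO_exp_neg_mul_rpow_atTop ha (-2 / p)).comp_tendsto hlim
  refine summable_of_isBigO_nat (summable_nat_rpow.mpr (by norm_num : (-2 : ℝ) < -1)) ?_
  refine ho.isBigO.congr (fun k => by simp [neg_mul]) fun k => ?_
  simp only [Function.comp_apply, ← rpow_mul (Nat.cast_nonneg k)]
  rw [mul_div_cancel₀ _ hp.ne']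

lemma eventually_half_le_of_tendsto_div_nhds_one {α : Type*} {l : Filter α} {f g : α → ℝ}
    (h : Tendsto (fun x => f x / g x) l (𝓝 1)) (hg : ∀ᶠ x in l, 0 < g x) :
    ∀ᶠ x in l, g x / 2 ≤ f x := by
  filter_upwards [h.eventually (eventually_ge_nhds (by norm_num : (1 : ℝ) / 2 < 1)), hg]
    with x hfg hgx
  rw [le_div_iff₀ hgx] at hfg
  linarith

theorem stmt_5_general (ν t c : ℝ) (d : ℕ) (hν : 0 < ν) (ht : 0 < t) (hc : 0 < c) (hd : 1 ≤ d)
    (lam m n : ℕ → ℝ) (hn : ∀ k, 0 < n k)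
    (hasymp : Tendsto (fun k : ℕ => lam k / (c * (k : ℝ) ^ (1 / (d : ℝ)))) atTop (nhds 1))
    (hmn : ∀ k, m k = n k * Real.sqrt (1 - Real.exp (-(2 * ν * (lam k) ^ 2 * t)))) :
    Summable (fun k : ℕ => (m k / n k - 1) ^ 2) := by
  have hd₀ : (0 : ℝ) < d := by exact_mod_cast hd
  have hlam := eventually_half_le_of_tendsto_div_nhds_one hasymp <|
    (eventually_ge_atTop 1).mono fun k hk => by
      have : (0 : ℝ) < k := by exact_mod_cast hk
      positivity
  refine (summable_exp_neg_mul_rpow (a := ν * t * c ^ 2 / 2) (p := 2 / d) (by positivity)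
    (by positivity)).of_norm_bounded_eventually_nat ?_
  filter_upwards [hlam] with k hk
  have hE : exp (-(2 * ν * lam k ^ 2 * t)) ≤ 1 := exp_le_one_iff.mpr (by
    simp only [neg_nonpos]; positivity)
  rw [hmn k, mul_div_cancel_left₀ _ (hn k).ne', Real.norm_of_nonneg (sq_nonneg _)]
  refine (sq_sqrt_one_sub_sub_one_le (exp_pos _).le hE).trans (exp_le_exp.mpr ?_)
  have hsq : (c * (k : ℝ) ^ (1 / (d : ℝ)) / 2) ^ 2 ≤ lam k ^ 2 :=
    pow_le_pow_left₀ (by positivity) hk 2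
  have hpow : (k : ℝ) ^ (2 / (d : ℝ)) = ((k : ℝ) ^ (1 / (d : ℝ))) ^ 2 := by
    rw [← rpow_mul_natCast (Nat.cast_nonneg k)]
    ring_nf
  rw [hpow]
  nlinarith [mul_pos hν ht]

theorem stmt_5 (ν t c : ℝ) (d : ℕ) (hν : 0 < ν) (ht : 0 < t) (hc : 0 < c) (hd : 1 ≤ d)
    (lam m n : ℕ → ℝ) (hn : ∀ k, 0 < n k) (hm : ∀ k, 0 < m k)
    (hasymp : Tendsto (fun k : ℕ => lam k / (c * (k : ℝ) ^ (1 / (d : ℝ)))) atTop (nhds 1))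
    (hmn : ∀ k, m k = n k * Real.sqrt (1 - Real.exp (-(2 * ν * (lam k) ^ 2 * t)))) :
    Summable (fun k : ℕ => (m k / n k - 1) ^ 2) :=
  stmt_5_general ν t c d hν ht hc hd lam m n hn hasymp hmn
end

section
/- Let $\breve{W}$ be the two-sided Brownian motion and let $f, g : \mathbb{R} \to \mathbb{R}$ be integrable with $\int |x f(x)|\,dx < \infty$ and $\int |x g(x)|\,dx < \infty$. Define $\breve{W}[f] = \int_{\mathbb{R}} f(x)\breve{W}(x)\,dx$ (and similarly for $g$). Then $\mathbb{E}\big(\breve{W}[f]\breve{W}[g]\big) = \int_{\mathbb{R}} F(x) G(x)\,dx$, where $F$ and $G$ are the antiderivatives of $f$ and $g$ defined by $F(x) = \int_{-\infty}^x f$ for $x<0$ and $F(x) = -\int_x^{+\infty} f$ for $x>0$. -/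
/-!
Write `K(x, ·)` for the indicator of the interval between `0` and `x`, with sign `-1` when
`x > 0`. Then `ρ(x, y) = ∫ K(x, t) K(y, t) dt` (morally `W̆(x) = ∫ K(x, t) dB(t)`), and
`∫ f(x) K(x, t) dx = F(t)`. Fubini over `ℝ² × Ω` gives
`E(W̆[f] W̆[g]) = ∬ f(x) g(y) ρ(x, y) dx dy`, and Fubini over `ℝ² × ℝ` turns the right-hand side
into `∫ F(t) G(t) dt`. Both applications are justified by the same bound
`∫ |X_x X_y| ≤ (∫ X_x² + ∫ X_y²) / 2 = (|x| + |y|) / 2`, which is integrable against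
`|f(x) g(y)|` thanks to the first-moment conditions.
-/

open MeasureTheory

/-- The antiderivative of `f` normalized to vanish at `±∞`:
`F(x) = ∫_{-∞}^x f` for `x < 0` and `F(x) = -∫_x^{+∞} f` for `x > 0`. -/
noncomputable def antider (f : ℝ → ℝ) (x : ℝ) : ℝ :=
  if x < 0 then ∫ t in Set.Iic x, f t else -∫ t in Set.Ici x, f t

section SecondMoment

variable {Ω : Type*} [MeasurableSpace Ω] {μ : Measure Ω}

lemma abs_mul_le_half_add_mul_self (a b : ℝ) : |a * b| ≤ (a * a + b * b) / 2 := by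
  rw [abs_mul]
  nlinarith [sq_nonneg (|a| - |b|), abs_mul_abs_self a, abs_mul_abs_self b]

variable {u v : Ω → ℝ}

lemma integrable_mul_of_integrable_mul_self (hu : AEStronglyMeasurable u μ)
    (hv : AEStronglyMeasurable v μ) (hu2 : Integrable (fun ω => u ω * u ω) μ)
    (hv2 : Integrable (fun ω => v ω * v ω) μ) : Integrable (fun ω => u ω * v ω) μ :=
  ((hu2.add hv2).div_const 2).mono' (hu.mul hv) <|
    ae_of_all _ fun ω => abs_mul_le_half_add_mul_self (u ω) (v ω)

lemma integral_abs_mul_le (hu : AEStronglyMeasurable u μ)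
    (hv : AEStronglyMeasurable v μ) (hu2 : Integrable (fun ω => u ω * u ω) μ)
    (hv2 : Integrable (fun ω => v ω * v ω) μ) :
    ∫ ω, |u ω * v ω| ∂μ ≤ ((∫ ω, u ω * u ω ∂μ) + ∫ ω, v ω * v ω ∂μ) / 2 := by
  rw [← integral_add hu2 hv2, ← integral_div]
  exact integral_mono (integrable_mul_of_integrable_mul_self hu hv hu2 hv2).abs
    ((hu2.add hv2).div_const 2) fun ω => abs_mul_le_half_add_mul_self (u ω) (v ω)

end SecondMoment

section Fubini

variable {α Ω : Type*} [MeasurableSpace α] [MeasurableSpace Ω] {ν : Measure α} {μ : Measure Ω}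
  [SFinite μ] {X : α → Ω → ℝ} {f g : α → ℝ}

lemma integrable_mul_mul_of_second_moment (hX : Measurable (Function.uncurry X))
    (hf : Integrable f ν) (hg : Integrable g ν)
    (hX2 : ∀ᵐ x ∂ν, Integrable (fun ω => X x ω * X x ω) μ)
    (hfX : Integrable (fun x => f x * ∫ ω, X x ω * X x ω ∂μ) ν)
    (hgX : Integrable (fun x => g x * ∫ ω, X x ω * X x ω ∂μ) ν) :
    Integrable (fun p : (α × α) × Ω => f p.1.1 * X p.1.1 p.2 * (g p.1.2 * X p.1.2 p.2))
      ((ν.prod ν).prod μ) := by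
  set m : α → ℝ := fun x => ∫ ω, X x ω * X x ω ∂μ
  have hXx : ∀ x, AEStronglyMeasurable (X x) μ := fun x =>
    hX.of_uncurry_left.aestronglyMeasurable
  have hF : AEStronglyMeasurable
      (fun p : (α × α) × Ω => f p.1.1 * X p.1.1 p.2 * (g p.1.2 * X p.1.2 p.2))
      ((ν.prod ν).prod μ) :=
    (hf.1.comp_fst.comp_fst.mul
        (hX.comp (measurable_fst.fst.prodMk measurable_snd)).aestronglyMeasurable).mul
      (hg.1.comp_snd.comp_fst.mul
        (hX.comp (measurable_fst.snd.prodMk measurable_snd)).aestronglyMeasurable)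
  have hX2_pair : ∀ᵐ z ∂(ν.prod ν), Integrable (fun ω => X z.1 ω * X z.1 ω) μ ∧
      Integrable (fun ω => X z.2 ω * X z.2 ω) μ :=
    (Measure.quasiMeasurePreserving_fst.ae hX2).and (Measure.quasiMeasurePreserving_snd.ae hX2)
  have hm : ∀ x, 0 ≤ m x := fun x => integral_nonneg fun ω => mul_self_nonneg _
  have hbound : Integrable
      (fun z : α × α => (|f z.1 * m z.1| * |g z.2| + |f z.1| * |g z.2 * m z.2|) / 2) (ν.prod ν) :=
    ((hfX.abs.mul_prod hg.abs).add (hf.abs.mul_prod hgX.abs)).div_const 2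
  refine (integrable_prod_iff hF).2 ⟨?_, hbound.mono' hF.norm.integral_prod_right' ?_⟩
  · filter_upwards [hX2_pair] with z hz
    simpa only [mul_mul_mul_comm] using
      (integrable_mul_of_integrable_mul_self (hXx z.1) (hXx z.2) hz.1 hz.2).const_mul
        (f z.1 * g z.2)
  · filter_upwards [hX2_pair] with z hz
    rw [Real.norm_eq_abs, abs_of_nonneg (integral_nonneg fun ω => norm_nonneg _)]
    calc ∫ ω, ‖f z.1 * X z.1 ω * (g z.2 * X z.2 ω)‖ ∂μ
        = |f z.1| * |g z.2| * ∫ ω, |X z.1 ω * X z.2 ω| ∂μ := by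
          rw [← integral_const_mul]; congr 1; ext ω
          simp only [Real.norm_eq_abs, abs_mul]; ring
      _ ≤ |f z.1| * |g z.2| * ((m z.1 + m z.2) / 2) := by
          gcongr
          exact integral_abs_mul_le (hXx z.1) (hXx z.2) hz.1 hz.2
      _ = (|f z.1 * m z.1| * |g z.2| + |f z.1| * |g z.2 * m z.2|) / 2 := by
          rw [abs_mul, abs_mul, abs_of_nonneg (hm z.1), abs_of_nonneg (hm z.2)]; ring

lemma integral_mul_integral_eq_integral_covariance [SFinite ν]
    (hX : Measurable (Function.uncurry X)) (hf : Integrable f ν) (hg : Integrable g ν)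
    (hX2 : ∀ᵐ x ∂ν, Integrable (fun ω => X x ω * X x ω) μ)
    (hfX : Integrable (fun x => f x * ∫ ω, X x ω * X x ω ∂μ) ν)
    (hgX : Integrable (fun x => g x * ∫ ω, X x ω * X x ω ∂μ) ν) :
    ∫ ω, (∫ x, f x * X x ω ∂ν) * (∫ x, g x * X x ω ∂ν) ∂μ
      = ∫ z, f z.1 * g z.2 * ∫ ω, X z.1 ω * X z.2 ω ∂μ ∂(ν.prod ν) := by
  simp_rw [← integral_prod_mul, ← integral_const_mul]
  rw [← integral_integral_swap (integrable_mul_mul_of_second_moment hX hf hg hX2 hfX hgX)]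
  congr 1; ext z; congr 1; ext ω; ring

end Fubini

noncomputable def twoSidedBMCov (x y : ℝ) : ℝ := if x * y > 0 then min |x| |y| else 0

lemma twoSidedBMCov_self (x : ℝ) : twoSidedBMCov x x = |x| := by
  rcases eq_or_ne x 0 with rfl | hx
  · simp [twoSidedBMCov]
  · simp [twoSidedBMCov, mul_self_pos.2 hx]

lemma integrable_mul_abs {f : ℝ → ℝ} (hf : Integrable f) (hf1 : Integrable (fun x => x * f x)) :
    Integrable (fun x => f x * |x|) :=
  hf1.mono (hf.1.mul continuous_abs.aestronglyMeasurable)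
    (ae_of_all _ fun x => by simp [mul_comm])

section Kernel

open Set

noncomputable def antiderKernel (x t : ℝ) : ℝ :=
  if t < 0 then (Iic t).indicator 1 x else -(Ioi t).indicator 1 x

lemma measurable_antiderKernel : Measurable (Function.uncurry antiderKernel) := by
  unfold Function.uncurry antiderKernel
  refine Measurable.ite (measurableSet_lt measurable_snd measurable_const) ?_ ?_
  · exact (measurable_const.indicator (measurableSet_le measurable_fst measurable_snd))
  · exact (measurable_const.indicator (measurableSet_lt measurable_snd measurable_fst)).neg

lemma integral_mul_antiderKernel (f : ℝ → ℝ) (t : ℝ) :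
    ∫ x, f x * antiderKernel x t = antider f t := by
  unfold antiderKernel antider
  split_ifs
  · simp [← indicator_mul_right, integral_indicator measurableSet_Iic]
  · simp [← indicator_mul_right, integral_neg, integral_indicator measurableSet_Ioi,
      integral_Ici_eq_integral_Ioi]

lemma antiderKernel_mul_antiderKernel (x y t : ℝ) :
    antiderKernel x t * antiderKernel y t = (Ico (max x y) 0 ∪ Ico 0 (min x y)).indicator 1 t := by
  unfold antiderKernel
  by_cases ht : t < 0
  · simp only [ht, if_true, indicator_apply, Pi.one_apply]
    split_ifs <;> grind
  · simp only [ht, if_false, indicator_apply, Pi.one_apply]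
    split_ifs <;> grind

lemma integrable_antiderKernel_mul (x y : ℝ) :
    Integrable (fun t => antiderKernel x t * antiderKernel y t) := by
  simp_rw [antiderKernel_mul_antiderKernel]
  exact (integrable_indicator_iff (measurableSet_Ico.union measurableSet_Ico)).2
    (integrableOn_const (by simp))

lemma integral_antiderKernel_mul (x y : ℝ) :
    ∫ t, antiderKernel x t * antiderKernel y t = twoSidedBMCov x y := by
  simp_rw [antiderKernel_mul_antiderKernel]
  rw [integral_indicator_one (measurableSet_Ico.union measurableSet_Ico),
    measureReal_union Ico_disjoint_Ico_same measurableSet_Ico (by simp) (by simp),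
    Real.volume_real_Ico, Real.volume_real_Ico, twoSidedBMCov]
  split_ifs with h
  · rcases mul_pos_iff.1 h with ⟨hx, hy⟩ | ⟨hx, hy⟩
    · rw [abs_of_pos hx, abs_of_pos hy]; grind
    · rw [abs_of_neg hx, abs_of_neg hy]; grind
  · rcases mul_nonpos_iff.1 (not_lt.1 h) with ⟨hx, hy⟩ | ⟨hx, hy⟩ <;> grind

end Kernel

theorem stmt_14 {Ω : Type*} [MeasurableSpace Ω] (P : Measure Ω) [IsProbabilityMeasure P]
    (brW : ℝ → Ω → ℝ)
    (hmeas : Measurable (Function.uncurry brW))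
    (hcov : ∀ x y : ℝ, ∫ ω, brW x ω * brW y ω ∂P = if x * y > 0 then min |x| |y| else 0)
    (f g : ℝ → ℝ) (hf : Integrable f) (hg : Integrable g)
    (hf1 : Integrable (fun x => x * f x)) (hg1 : Integrable (fun x => x * g x)) :
    ∫ ω, (∫ x : ℝ, f x * brW x ω) * (∫ x : ℝ, g x * brW x ω) ∂P
      = ∫ x : ℝ, antider f x * antider g x := by
  have hW2 : ∀ x, ∫ ω, brW x ω * brW x ω ∂P = |x| :=
    fun x => (hcov x x).trans (twoSidedBMCov_self x)
  have hK2 : ∀ x, ∫ t, antiderKernel x t * antiderKernel x t = |x| :=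
    fun x => (integral_antiderKernel_mul x x).trans (twoSidedBMCov_self x)
  have hfX := integrable_mul_abs hf hf1
  have hgX := integrable_mul_abs hg hg1
  -- At `x = 0` the integral `0` may be a junk value, so integrability only holds off `0`.
  have hW2_int : ∀ᵐ x, Integrable (fun ω => brW x ω * brW x ω) P := by
    filter_upwards [Measure.ae_ne volume 0] with x hx
    exact Integrable.of_integral_ne_zero (by rwa [hW2, abs_ne_zero])
  calc _ = ∫ z : ℝ × ℝ, f z.1 * g z.2 * ∫ ω, brW z.1 ω * brW z.2 ω ∂P :=
        integral_mul_integral_eq_integral_covariance hmeas hf hg hW2_int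
          (by simpa only [hW2] using hfX) (by simpa only [hW2] using hgX)
    _ = ∫ z : ℝ × ℝ, f z.1 * g z.2 * ∫ t, antiderKernel z.1 t * antiderKernel z.2 t := by
        simp only [hcov, integral_antiderKernel_mul, twoSidedBMCov]
    _ = ∫ t, (∫ x, f x * antiderKernel x t) * (∫ x, g x * antiderKernel x t) :=
        (integral_mul_integral_eq_integral_covariance measurable_antiderKernel hf hg
          (ae_of_all _ fun x => integrable_antiderKernel_mul x x)
          (by simpa only [hK2] using hfX) (by simpa only [hK2] using hgX)).symm
    _ = _ := by simp only [integral_mul_antiderKernel]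
end
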